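/- arXiv:2201.00413 — 2 statements merged into one kernel-verified Lean document; each statement's English description precedes it below -/
import Mathlib

section
/- (Monotone speed of contracting sets) Let K : ℝ^d → ℝ be non-negative and integrable, let E₀ ⊆ ℝ^d be measurable, and set E₁ := T_K E₀ and E₂ := T_K E₁. If E₁ ⊆ E₀, then E₂ ⊆ E₁ and moreover dist(E₂, ∂E₁) ≥ dist(E₁, ∂E₀), i.e. inf{ |x − y| : x ∈ E₂, y ∈ frontier(E₁) } ≥ inf{ |x − y| : x ∈ E₁, y ∈ frontier(E₀) } (with the convention that the infimum over the empty set is +∞). -/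
open MeasureTheory
open scoped ENNReal

/-- The convolution of a kernel `K` with the indicator function of a set `E`. -/
noncomputable def conv {d : ℕ} (K : EuclideanSpace ℝ (Fin d) → ℝ)
    (E : Set (EuclideanSpace ℝ (Fin d))) (x : EuclideanSpace ℝ (Fin d)) : ℝ :=
  ∫ y, K (x - y) * E.indicator (fun _ => (1 : ℝ)) y

/-- The thresholding operator `T_K E = {x | (K ∗ χ_E)(x) > 1/2}`. -/
def thresh {d : ℕ} (K : EuclideanSpace ℝ (Fin d) → ℝ)
    (E : Set (EuclideanSpace ℝ (Fin d))) : Set (EuclideanSpace ℝ (Fin d)) :=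
  {x | 1 / 2 < conv K E x}

/-- A segment from a point of `s` to a point outside `s` meets the frontier of `s`. -/
lemma seg_frontier {X : Type*} [NormedAddCommGroup X] [NormedSpace ℝ X]
    {s : Set X} {p v : X} (hp : p ∈ s) (hpv : p + v ∉ s) :
    ∃ q ∈ frontier s, ‖p - q‖ ≤ ‖v‖ := by
  set f : ℝ → X := fun t => p + t • v with hf
  have hfc : Continuous f := by continuity
  set A : Set ℝ := Set.Icc (0:ℝ) 1 ∩ f ⁻¹' closure s with hA
  have h0 : (0:ℝ) ∈ A := by
    constructor
    · exact Set.mem_Icc.2 ⟨le_refl _, zero_le_one⟩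
    · simp only [Set.mem_preimage, hf, zero_smul, add_zero]
      exact subset_closure hp
  have hAne : A.Nonempty := ⟨0, h0⟩
  have hAbdd : BddAbove A := BddAbove.mono Set.inter_subset_left (bddAbove_Icc)
  have hAcl : IsClosed A := isClosed_Icc.inter (isClosed_closure.preimage hfc)
  set t₀ := sSup A with ht₀
  have ht₀A : t₀ ∈ A := hAcl.csSup_mem hAne hAbdd
  have ht₀I : t₀ ∈ Set.Icc (0:ℝ) 1 := ht₀A.1
  have hcls : f t₀ ∈ closure s := ht₀A.2
  have hclsc : f t₀ ∈ closure sᶜ := by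
    rcases eq_or_lt_of_le ht₀I.2 with h1 | h1
    · have : f t₀ = p + v := by simp [hf, h1]
      rw [this]; exact subset_closure hpv
    · -- t₀ < 1, approximate from the right
      have hmem : t₀ ∈ closure (Set.Ioc t₀ 1) := by
        rw [closure_Ioc (ne_of_lt h1)]
        exact Set.mem_Icc.2 ⟨le_refl _, le_of_lt h1⟩
      have hsub : f '' Set.Ioc t₀ 1 ⊆ sᶜ := by
        rintro _ ⟨t, ht, rfl⟩
        intro hts
        have htA : t ∈ A := by
          refine ⟨Set.mem_Icc.2 ⟨le_trans ht₀I.1 (le_of_lt ht.1), ht.2⟩, subset_closure hts⟩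
        exact absurd (le_csSup hAbdd htA) (not_le.2 ht.1)
      have := (hfc.continuousWithinAt (x := t₀) (s := Set.Ioc t₀ 1)).mem_closure_image hmem
      exact closure_mono hsub this
  refine ⟨f t₀, ?_, ?_⟩
  · rw [frontier_eq_closure_inter_closure]; exact ⟨hcls, hclsc⟩
  · have : p - f t₀ = -(t₀ • v) := by simp [hf]
    rw [this, norm_neg, norm_smul, Real.norm_eq_abs, abs_of_nonneg ht₀I.1]
    calc t₀ * ‖v‖ ≤ 1 * ‖v‖ := by
          apply mul_le_mul_of_nonneg_right ht₀I.2 (norm_nonneg _)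
      _ = ‖v‖ := one_mul _

/-- If `A + v ⊆ B` then `conv K A x ≤ conv K B (x + v)`. -/
lemma conv_shift_le {d : ℕ} {K : EuclideanSpace ℝ (Fin d) → ℝ}
    (hK0 : ∀ x, 0 ≤ K x) (hKint : Integrable K)
    {A B : Set (EuclideanSpace ℝ (Fin d))} (hB : MeasurableSet B)
    (v x : EuclideanSpace ℝ (Fin d)) (h : ∀ p ∈ A, p + v ∈ B) :
    conv K A x ≤ conv K B (x + v) := by
  have hKx : Integrable (fun z : EuclideanSpace ℝ (Fin d) => K (x - z)) :=
    hKint.comp_sub_left x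
  have htrans : conv K B (x + v)
      = ∫ z, K (x - z) * B.indicator (fun _ => (1:ℝ)) (z + v) := by
    rw [conv]
    rw [← integral_add_right_eq_self
      (fun y => K (x + v - y) * B.indicator (fun _ => (1:ℝ)) y) v]
    congr 1
    funext z
    congr 2
    abel
  rw [htrans, conv]
  have hBv : MeasurableSet ((fun z : EuclideanSpace ℝ (Fin d) => z + v) ⁻¹' B) :=
    hB.preimage (measurable_add_const v)
  apply integral_mono_of_nonneg
  · filter_upwards with z
    have : (0:ℝ) ≤ A.indicator (fun _ => (1:ℝ)) z := by
      apply Set.indicator_nonneg; intros; exact zero_le_one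
    exact mul_nonneg (hK0 _) this
  · have : (fun z => K (x - z) * B.indicator (fun _ => (1:ℝ)) (z + v))
        = ((fun z : EuclideanSpace ℝ (Fin d) => z + v) ⁻¹' B).indicator
          (fun z => K (x - z)) := by
      funext z
      by_cases hz : z + v ∈ B <;>
        simp [Set.indicator_apply, hz, Set.mem_preimage]
    rw [this]
    exact hKx.indicator hBv
  · filter_upwards with z
    by_cases hz : z ∈ A
    · have hzB : z + v ∈ B := h z hz
      simp [Set.indicator_apply, hz, hzB]
    · rw [Set.indicator_of_notMem hz, mul_zero]
      have : (0:ℝ) ≤ B.indicator (fun _ => (1:ℝ)) (z + v) := by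
        apply Set.indicator_nonneg; intros; exact zero_le_one
      exact mul_nonneg (hK0 _) this

lemma conv_mono {d : ℕ} {K : EuclideanSpace ℝ (Fin d) → ℝ}
    (hK0 : ∀ x, 0 ≤ K x) (hKint : Integrable K)
    {A B : Set (EuclideanSpace ℝ (Fin d))} (hB : MeasurableSet B)
    (hAB : A ⊆ B) (x : EuclideanSpace ℝ (Fin d)) : conv K A x ≤ conv K B x := by
  have := conv_shift_le hK0 hKint hB 0 x (fun p hp => by simpa using hAB hp)
  simpa using this

/-- Monotone speed of contracting sets: if `E₁ = T_K E₀ ⊆ E₀`, then `E₂ = T_K E₁ ⊆ E₁` and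
    `dist(E₂, ∂E₁) ≥ dist(E₁, ∂E₀)`, where distances are infima in `[0,∞]` (the infimum over
    the empty set being `+∞`). -/
theorem monotone_speed
    {d : ℕ} (K : EuclideanSpace ℝ (Fin d) → ℝ)
    (hK0 : ∀ x, 0 ≤ K x) (hKint : Integrable K)
    (E₀ : Set (EuclideanSpace ℝ (Fin d))) (hE₀ : MeasurableSet E₀)
    (hcontract : thresh K E₀ ⊆ E₀) :
    thresh K (thresh K E₀) ⊆ thresh K E₀ ∧
    (⨅ x ∈ thresh K E₀, ⨅ y ∈ frontier E₀, edist x y) ≤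
      ⨅ x ∈ thresh K (thresh K E₀), ⨅ y ∈ frontier (thresh K E₀), edist x y := by
  set E₁ := thresh K E₀ with hE₁
  set E₂ := thresh K E₁ with hE₂
  have hsub : E₂ ⊆ E₁ := by
    intro x hx
    have h1 : 1/2 < conv K E₁ x := hx
    have h2 : conv K E₁ x ≤ conv K E₀ x := conv_mono hK0 hKint hE₀ hcontract x
    exact lt_of_lt_of_le h1 h2
  refine ⟨hsub, ?_⟩
  refine le_iInf₂ fun x hx => le_iInf₂ fun y hy => ?_
  -- x ∈ E₂, y ∈ frontier E₁; show dist(E₁, ∂E₀) ≤ edist x y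
  refine ENNReal.le_of_forall_pos_le_add fun ε hε _ => ?_
  -- pick y' ∉ E₁ with dist y y' < ε
  have hyc : y ∈ closure E₁ᶜ := by
    rw [closure_compl]
    exact hy.2
  rw [Metric.mem_closure_iff] at hyc
  obtain ⟨y', hy'c, hy'd⟩ := hyc ε (by exact_mod_cast hε)
  -- E₁ + (y' - x) ⊄ E₀
  have hnot : ¬ ∀ p ∈ E₁, p + (y' - x) ∈ E₀ := by
    intro hall
    have h1 : conv K E₁ x ≤ conv K E₀ (x + (y' - x)) :=
      conv_shift_le hK0 hKint hE₀ (y' - x) x hall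
    have hx2 : 1/2 < conv K E₁ x := hx
    have : x + (y' - x) = y' := by abel
    rw [this] at h1
    exact hy'c (lt_of_lt_of_le hx2 h1)
  push_neg at hnot
  obtain ⟨p, hpE₁, hpv⟩ := hnot
  obtain ⟨q, hq, hqd⟩ := seg_frontier (hcontract hpE₁) hpv
  calc (⨅ x ∈ E₁, ⨅ y ∈ frontier E₀, edist x y)
      ≤ edist p q := le_trans (iInf₂_le p hpE₁) (iInf₂_le q hq)
    _ ≤ edist x y + ε := by
        have h1 : dist p q ≤ dist x y' := by
          rw [dist_eq_norm, dist_comm x y', dist_eq_norm]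
          exact hqd
        have h2 : dist x y' ≤ dist x y + dist y y' := dist_triangle x y y'
        have hreal : dist p q ≤ dist x y + (ε:ℝ) := by linarith
        calc edist p q = ENNReal.ofReal (dist p q) := edist_dist _ _
          _ ≤ ENNReal.ofReal (dist x y + (ε:ℝ)) := ENNReal.ofReal_le_ofReal hreal
          _ = ENNReal.ofReal (dist x y) + ENNReal.ofReal (ε:ℝ) :=
              ENNReal.ofReal_add dist_nonneg ε.coe_nonneg
          _ = edist x y + ε := by rw [← edist_dist, ENNReal.ofReal_coe_nnreal]
end

section
/- (Decrease of the K-perimeter under thresholding) Let K be a suitable convolution kernel on ℝ^d and let E₀ be locally K-outward minimizing in Ω, and set E₁ := T_K E₀. Then P_K(E₁) + S_K(E₀ \ E₁) ≤ P_K(E₀). -/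
open MeasureTheory
open scoped ENNReal

/-- The `K`-perimeter `P_K(D) = ∫_{Dᶜ} K ∗ χ_D`, as a value in `[0,∞]`. -/
noncomputable def PK {d : ℕ} (K : EuclideanSpace ℝ (Fin d) → ℝ)
    (D : Set (EuclideanSpace ℝ (Fin d))) : ℝ≥0∞ :=
  ∫⁻ x in Dᶜ, ENNReal.ofReal (conv K D x)

/-- The self-interaction `S_K(D) = ∫_D K ∗ χ_D`, as a value in `[0,∞]`. -/
noncomputable def SK {d : ℕ} (K : EuclideanSpace ℝ (Fin d) → ℝ)
    (D : Set (EuclideanSpace ℝ (Fin d))) : ℝ≥0∞ :=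
  ∫⁻ x in D, ENNReal.ofReal (conv K D x)

/-- `E₀` is locally `K`-outward minimizing in `Ω`: `E₀` is a measurable subset of `Ω` with
    finite `K`-perimeter, `Ω` is sufficiently large (`Ω ⊇ T_K E₀ ∪ E₀`), and
    `P_K(E₀ ∪ F) + S_K(F) ≥ P_K(E₀)` for all measurable `F ⊆ Ω \ E₀`. -/
def LocallyOutwardMin {d : ℕ} (K : EuclideanSpace ℝ (Fin d) → ℝ)
    (E₀ Ω : Set (EuclideanSpace ℝ (Fin d))) : Prop :=
  MeasurableSet E₀ ∧ E₀ ⊆ Ω ∧ PK K E₀ ≠ ⊤ ∧ thresh K E₀ ∪ E₀ ⊆ Ω ∧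
  ∀ F : Set (EuclideanSpace ℝ (Fin d)), MeasurableSet F → F ⊆ Ω \ E₀ →
    PK K E₀ ≤ PK K (E₀ ∪ F) + SK K F

/-!
Write `I(X, Y) = ∫_X ∫_Y K(x - y) dy dx`, which is symmetric since `K` is even, so that
`P_K(D) = I(Dᶜ, D)` and `S_K(D) = I(D, D)`. As `∫ K = 1`, a point lies in `T_K E` iff
`K ∗ χ_{Eᶜ} < K ∗ χ_E` there. Testing outward minimality with `F = T_K E₀ \ E₀` gives
`I(F, E₀) ≤ I(F, E₀ᶜ)`, whereas the reverse strict inequality holds pointwise on `F`;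
hence `F` is null and `T_K E₀` agrees a.e. with `A = T_K E₀ ∩ E₀`. For `D = E₀ \ A`,
`P_K(A) + S_K(D) = I(E₀ᶜ, A) + I(D, E₀) ≤ I(E₀ᶜ, A) + I(D, E₀ᶜ) = P_K(E₀)`,
because `K ∗ χ_{E₀} ≤ K ∗ χ_{E₀ᶜ}` off `T_K E₀`.

Only the a.e. class of `K` enters the convolutions, so `K` may first be replaced by a
measurable even representative.
-/

open Set

section ModifyKernel

variable {G : Type*} [MeasurableSpace G] [InvolutiveNeg G] [MeasurableNeg G]
  {μ : Measure G} [μ.IsNegInvariant]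

theorem exists_measurable_even_nonneg_ae_eq {K : G → ℝ} (hK : AEMeasurable K μ)
    (hK0 : ∀ x, 0 ≤ K x) (hKeven : ∀ x, K (-x) = K x) :
    ∃ K' : G → ℝ,
      Measurable K' ∧ (∀ x, 0 ≤ K' x) ∧ (∀ x, K' (-x) = K' x) ∧ K' =ᵐ[μ] K := by
  set K₁ := hK.mk K
  have hK₁ : K =ᵐ[μ] K₁ := hK.ae_eq_mk
  have hK₁_neg : (fun x => K₁ (-x)) =ᵐ[μ] K := by
    have := (Measure.measurePreserving_neg μ).quasiMeasurePreserving.ae_eq_comp hK₁.symm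
    exact this.trans (.of_forall hKeven)
  refine ⟨fun x => max 0 (min (K₁ x) (K₁ (-x))), ?_, fun x => le_max_left _ _,
    fun x => by simp only [neg_neg, min_comm], ?_⟩
  · exact measurable_const.max (hK.measurable_mk.min (hK.measurable_mk.comp measurable_neg))
  · filter_upwards [hK₁, hK₁_neg] with x h₁ h₂
    rw [← h₁, h₂, min_self, max_eq_right (hK0 x)]

end ModifyKernel

section ConvolutionKernel

variable {d : ℕ} {K K' : EuclideanSpace ℝ (Fin d) → ℝ}
  {X Y Z E F A D D' Ω : Set (EuclideanSpace ℝ (Fin d))}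

theorem conv_congr_ae (h : K' =ᵐ[volume] K) : conv K' = conv K := by
  funext E x
  refine integral_congr_ae ?_
  filter_upwards
    [(Measure.measurePreserving_sub_left volume x).quasiMeasurePreserving.ae_eq_comp h] with y hy
  simp only [Function.comp_apply] at hy
  rw [hy]

theorem conv_eq_setIntegral (hE : MeasurableSet E) (x : EuclideanSpace ℝ (Fin d)) :
    conv K E x = ∫ y in E, K (x - y) := by
  rw [conv, ← integral_indicator hE]
  congr 1 with y
  by_cases hy : y ∈ E <;> simp [hy]

theorem measurable_conv (hK : Measurable K) (hE : MeasurableSet E) : Measurable (conv K E) :=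
  (((hK.comp measurable_sub).mul
    ((measurable_const.indicator hE).comp measurable_snd)).stronglyMeasurable.integral_prod_right'
      (ν := volume)).measurable

theorem ofReal_conv (hK0 : ∀ x, 0 ≤ K x) (hKint : Integrable K) (hE : MeasurableSet E)
    (x : EuclideanSpace ℝ (Fin d)) :
    ENNReal.ofReal (conv K E x) = ∫⁻ y in E, ENNReal.ofReal (K (x - y)) := by
  rw [conv_eq_setIntegral hE, ofReal_integral_eq_lintegral_ofReal
    (hKint.comp_sub_left x).restrict (.of_forall fun y => hK0 _)]

theorem conv_add_conv_compl (hKint : Integrable K) (hK1 : ∫ x, K x = 1) (hE : MeasurableSet E)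
    (x : EuclideanSpace ℝ (Fin d)) : conv K E x + conv K Eᶜ x = 1 := by
  rw [conv_eq_setIntegral hE, conv_eq_setIntegral hE.compl,
    integral_add_compl hE (hKint.comp_sub_left x), integral_sub_left_eq_self, hK1]

theorem mem_thresh_iff (hKint : Integrable K) (hK1 : ∫ x, K x = 1) (hE : MeasurableSet E)
    (x : EuclideanSpace ℝ (Fin d)) : x ∈ thresh K E ↔ conv K Eᶜ x < conv K E x := by
  have := conv_add_conv_compl hKint hK1 hE x
  simp only [thresh, mem_ofPred_eq]
  constructor <;> intro <;> linarith

theorem measurableSet_thresh (hK : Measurable K) (hE : MeasurableSet E) :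
    MeasurableSet (thresh K E) :=
  measurableSet_lt measurable_const (measurable_conv hK hE)

theorem PK_congr_ae (h : D =ᵐ[volume] D') : PK K D = PK K D' := by
  have hconv : conv K D = conv K D' := by
    funext x
    refine integral_congr_ae ?_
    filter_upwards [indicator_ae_eq_of_ae_eq_set (f := fun _ => (1 : ℝ)) h] with y hy
    rw [hy]
  rw [PK, PK, hconv, setLIntegral_congr h.compl]

noncomputable def interaction (K : EuclideanSpace ℝ (Fin d) → ℝ)
    (X Y : Set (EuclideanSpace ℝ (Fin d))) : ℝ≥0∞ :=
  ∫⁻ x in X, ∫⁻ y in Y, ENNReal.ofReal (K (x - y))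

theorem measurable_setLIntegral_kernel (hK : Measurable K) (Y : Set (EuclideanSpace ℝ (Fin d))) :
    Measurable fun x => ∫⁻ y in Y, ENNReal.ofReal (K (x - y)) :=
  Measurable.lintegral_prod_right (f := fun x y => ENNReal.ofReal (K (x - y)))
    (hK.comp measurable_sub).ennreal_ofReal

theorem interaction_union_left (hY : MeasurableSet Y) (hXY : Disjoint X Y) :
    interaction K (X ∪ Y) Z = interaction K X Z + interaction K Y Z :=
  lintegral_union hY hXY

theorem interaction_union_right (hK : Measurable K) (hZ : MeasurableSet Z) (hYZ : Disjoint Y Z) :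
    interaction K X (Y ∪ Z) = interaction K X Y + interaction K X Z := by
  rw [interaction, lintegral_congr fun x => lintegral_union hZ hYZ, lintegral_add_left]
  · rfl
  exact measurable_setLIntegral_kernel hK Y

theorem interaction_mono_left (hXY : X ⊆ Y) : interaction K X Z ≤ interaction K Y Z :=
  lintegral_mono_set hXY

theorem interaction_comm (hK : Measurable K) (hKeven : ∀ x, K (-x) = K x) :
    interaction K X Y = interaction K Y X := by
  have hsymm : ∀ x y, K (x - y) = K (y - x) := fun x y => by rw [← hKeven, neg_sub]
  unfold interaction
  conv_lhs => enter [2, x, 2, y]; rw [hsymm]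
  exact lintegral_lintegral_swap
    (hK.comp (measurable_snd.sub measurable_fst)).ennreal_ofReal.aemeasurable

theorem PK_eq_interaction (hK0 : ∀ x, 0 ≤ K x) (hKint : Integrable K) (hE : MeasurableSet E) :
    PK K E = interaction K Eᶜ E :=
  lintegral_congr fun x => ofReal_conv hK0 hKint hE x

theorem SK_eq_interaction (hK0 : ∀ x, 0 ≤ K x) (hKint : Integrable K) (hE : MeasurableSet E) :
    SK K E = interaction K E E :=
  lintegral_congr fun x => ofReal_conv hK0 hKint hE x

theorem interaction_compl_lt_of_subset_thresh (hK : Measurable K) (hK0 : ∀ x, 0 ≤ K x)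
    (hKint : Integrable K) (hK1 : ∫ x, K x = 1) (hE : MeasurableSet E) (hF : MeasurableSet F)
    (hFT : F ⊆ thresh K E) (hF0 : volume F ≠ 0) (hfin : interaction K F E ≠ ⊤) :
    interaction K F Eᶜ < interaction K F E := by
  have hlt : ∀ᵐ x ∂volume.restrict F,
      ∫⁻ y in Eᶜ, ENNReal.ofReal (K (x - y)) < ∫⁻ y in E, ENNReal.ofReal (K (x - y)) := by
    refine (ae_restrict_iff' hF).2 (.of_forall fun x hx => ?_)
    have hhalf : 1 / 2 < conv K E x := hFT hx
    rw [← ofReal_conv hK0 hKint hE, ← ofReal_conv hK0 hKint hE.compl,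
      ENNReal.ofReal_lt_ofReal_iff (by linarith)]
    exact (mem_thresh_iff hKint hK1 hE x).1 (hFT hx)
  exact lintegral_strict_mono (by rwa [Ne, Measure.restrict_eq_zero])
    (measurable_setLIntegral_kernel hK E).aemeasurable
    (ne_top_of_le_ne_top hfin (lintegral_mono_ae (hlt.mono fun _ h => h.le))) hlt

theorem interaction_le_compl_of_disjoint_thresh (hK0 : ∀ x, 0 ≤ K x) (hKint : Integrable K)
    (hK1 : ∫ x, K x = 1) (hE : MeasurableSet E) (hD : MeasurableSet D)
    (hDT : Disjoint D (thresh K E)) : interaction K D E ≤ interaction K D Eᶜ := by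
  refine setLIntegral_mono' hD fun x hx => ?_
  rw [← ofReal_conv hK0 hKint hE, ← ofReal_conv hK0 hKint hE.compl]
  exact ENNReal.ofReal_le_ofReal
    (not_lt.1 fun h => disjoint_left.1 hDT hx ((mem_thresh_iff hKint hK1 hE x).2 h))

-- The interaction of `(E ∪ F)ᶜ` with `E` appears on both sides of `hmin` and cancels.
theorem interaction_le_compl_of_le_PK_union (hK : Measurable K) (hK0 : ∀ x, 0 ≤ K x)
    (hKeven : ∀ x, K (-x) = K x) (hKint : Integrable K) (hE : MeasurableSet E)
    (hF : MeasurableSet F) (hEF : Disjoint E F) (hfin : PK K E ≠ ⊤)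
    (hmin : PK K E ≤ PK K (E ∪ F) + SK K F) : interaction K F E ≤ interaction K F Eᶜ := by
  have hcompl : Eᶜ = (E ∪ F)ᶜ ∪ F := by
    rw [compl_union, ← Set.sdiff_eq, sdiff_union_self, union_eq_left.2 hEF.subset_compl_left]
  have hGF : Disjoint (E ∪ F)ᶜ F := disjoint_compl_left.mono_right subset_union_right
  have hPK : PK K E = interaction K (E ∪ F)ᶜ E + interaction K F E := by
    rw [PK_eq_interaction hK0 hKint hE, hcompl, interaction_union_left hF hGF]
  have hPK_union :
      PK K (E ∪ F) + SK K F = interaction K (E ∪ F)ᶜ E + interaction K F Eᶜ := by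
    rw [PK_eq_interaction hK0 hKint (hE.union hF), SK_eq_interaction hK0 hKint hF,
      interaction_union_right hK hF hEF, add_assoc,
      interaction_comm hK hKeven (X := (E ∪ F)ᶜ) (Y := F),
      ← interaction_union_right hK hF hGF, ← hcompl]
  have hGfin : interaction K (E ∪ F)ᶜ E ≠ ⊤ :=
    ne_top_of_le_ne_top hfin (hPK ▸ le_self_add)
  rwa [hPK, hPK_union, ENNReal.add_le_add_iff_left hGfin] at hmin

theorem volume_thresh_diff_eq_zero (hK : Measurable K) (hK0 : ∀ x, 0 ≤ K x)
    (hKeven : ∀ x, K (-x) = K x) (hKint : Integrable K) (hK1 : ∫ x, K x = 1)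
    (h : LocallyOutwardMin K E Ω) : volume (thresh K E \ E) = 0 := by
  obtain ⟨hE, -, hfin, hΩ, hmin⟩ := h
  have hF : MeasurableSet (thresh K E \ E) := (measurableSet_thresh hK hE).diff hE
  have hle := interaction_le_compl_of_le_PK_union hK hK0 hKeven hKint hE hF
    disjoint_sdiff_right hfin (hmin _ hF fun x hx => ⟨hΩ (.inl hx.1), hx.2⟩)
  have hFfin : interaction K (thresh K E \ E) E ≠ ⊤ :=
    ne_top_of_le_ne_top (PK_eq_interaction hK0 hKint hE ▸ hfin)
      (interaction_mono_left fun _ hx => hx.2)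
  by_contra hF0
  exact (interaction_compl_lt_of_subset_thresh hK hK0 hKint hK1 hE hF sdiff_subset hF0
    hFfin).not_ge hle

theorem PK_add_SK_diff_le (hK : Measurable K) (hK0 : ∀ x, 0 ≤ K x)
    (hKeven : ∀ x, K (-x) = K x) (hKint : Integrable K) (hK1 : ∫ x, K x = 1)
    (hE : MeasurableSet E) (hA : MeasurableSet A) (hAE : A ⊆ E) (hTA : thresh K E ∩ E ⊆ A) :
    PK K A + SK K (E \ A) ≤ PK K E := by
  set D := E \ A
  have hD : MeasurableSet D := hE.diff hA
  have hAD : Disjoint A D := disjoint_sdiff_right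
  have hADE : A ∪ D = E := union_sdiff_cancel hAE
  have hcompl : Aᶜ = Eᶜ ∪ D := by
    ext x
    simp only [D, mem_compl_iff, mem_union, mem_sdiff]
    have := @hAE x
    tauto
  have hED : Disjoint Eᶜ D := disjoint_compl_left.mono_right sdiff_subset
  have hDT : Disjoint D (thresh K E) :=
    disjoint_left.2 fun x hx hxT => hx.2 (hTA ⟨hxT, hx.1⟩)
  calc PK K A + SK K D = interaction K Eᶜ A + interaction K D E := by
        rw [PK_eq_interaction hK0 hKint hA, SK_eq_interaction hK0 hKint hD, hcompl,
          interaction_union_left hD hED, add_assoc, ← interaction_union_right hK hD hAD, hADE]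
    _ ≤ interaction K Eᶜ A + interaction K D Eᶜ :=
        add_le_add_right (interaction_le_compl_of_disjoint_thresh hK0 hKint hK1 hE hD hDT) _
    _ = PK K E := by
        rw [interaction_comm hK hKeven (X := D) (Y := Eᶜ),
          ← interaction_union_right hK hD hAD, hADE, PK_eq_interaction hK0 hKint hE]

theorem PK_thresh_add_SK_le_of_measurable (hK : Measurable K) (hK0 : ∀ x, 0 ≤ K x)
    (hKeven : ∀ x, K (-x) = K x) (hKint : Integrable K) (hK1 : ∫ x, K x = 1)
    (h : LocallyOutwardMin K E Ω) :
    PK K (thresh K E) + SK K (E \ thresh K E) ≤ PK K E := by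
  have hE : MeasurableSet E := h.1
  have hT_ae : (thresh K E ∩ E : Set _) =ᵐ[volume] thresh K E :=
    sdiff_sdiff_right_self (thresh K E) E ▸
      sdiff_null_ae_eq_self (volume_thresh_diff_eq_zero hK hK0 hKeven hKint hK1 h)
  rw [← PK_congr_ae hT_ae, ← sdiff_inter_self_eq_sdiff]
  exact PK_add_SK_diff_le hK hK0 hKeven hKint hK1 hE
    ((measurableSet_thresh hK hE).inter hE) inter_subset_right subset_rfl

end ConvolutionKernel

/-- Decrease of the `K`-perimeter under thresholding: if `E₀` is locally `K`-outward
    minimizing in `Ω` and `E₁ = T_K E₀`, then `P_K(E₁) + S_K(E₀ \ E₁) ≤ P_K(E₀)`. -/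
theorem PK_decreases_under_thresholding
    {d : ℕ} (K : EuclideanSpace ℝ (Fin d) → ℝ)
    (hK0 : ∀ x, 0 ≤ K x) (hKeven : ∀ x, K (-x) = K x)
    (hKint : Integrable K) (hK1 : ∫ x, K x = 1)
    (E₀ Ω : Set (EuclideanSpace ℝ (Fin d)))
    (h : LocallyOutwardMin K E₀ Ω) :
    PK K (thresh K E₀) + SK K (E₀ \ thresh K E₀) ≤ PK K E₀ := by
  obtain ⟨K', hK'm, hK'0, hK'even, hK'K⟩ :=
    exists_measurable_even_nonneg_ae_eq hKint.aemeasurable hK0 hKeven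
  have hconv : conv K' = conv K := conv_congr_ae hK'K
  have hK'1 : ∫ x, K' x = 1 := by rw [integral_congr_ae hK'K, hK1]
  have h' : LocallyOutwardMin K' E₀ Ω := by
    simpa only [LocallyOutwardMin, PK, SK, thresh, hconv] using h
  simpa only [PK, SK, thresh, hconv] using
    PK_thresh_add_SK_le_of_measurable hK'm hK'0 hK'even (hKint.congr hK'K.symm) hK'1 h'
end
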